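/- arXiv:1801.02799 — 2 statements merged into one kernel-verified Lean document; each statement's English description precedes it below -/
import Mathlib

section
/- If B < W·β·E/(2·H^α·ln 2), then there exists T > 0 such that (T/2)·W·log₂(1 + β·E/(T·H^α)) = B; conversely, if B ≥ W·β·E/(2·H^α·ln 2), then no T > 0 satisfies (T/2)·W·log₂(1 + β·E/(T·H^α)) ≥ B. -/
/-!
With `c = β E / H ^ α` the collected data equal `W / (2 log 2) · T log (1 + c / T)`.
Since `log (1 + x) < x`, the function `T log (1 + c / T)` stays below `c` on `T > 0`; it tends to
`0` as `T → 0⁺` and to `c` as `T → ∞`, so by continuity it takes every value in `(0, c)`.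
-/

open Real Filter Topology Set

namespace Real

variable {c : ℝ}

theorem mul_log_one_add_div_lt (hc : 0 < c) {T : ℝ} (hT : 0 < T) :
    T * log (1 + c / T) < c := by
  have hcT : 0 < c / T := div_pos hc hT
  have hlog : log (1 + c / T) < c / T := by
    linarith [log_lt_sub_one_of_pos (by positivity : 0 < 1 + c / T) (by linarith)]
  calc T * log (1 + c / T) < T * (c / T) := mul_lt_mul_of_pos_left hlog hT
    _ = c := mul_div_cancel₀ c hT.ne'

theorem tendsto_mul_log_one_add_div_nhdsGT_zero (hc : 0 < c) :
    Tendsto (fun T => T * log (1 + c / T)) (𝓝[>] 0) (𝓝 0) := by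
  have hsplit : ∀ᶠ T in 𝓝[>] (0 : ℝ), T * log (T + c) - T * log T = T * log (1 + c / T) := by
    filter_upwards [self_mem_nhdsWithin] with T (hT : 0 < T)
    rw [← mul_sub, ← log_div (by positivity) hT.ne', add_div, div_self hT.ne']
  have hfirst : ContinuousAt (fun T => T * log (T + c)) 0 :=
    continuousAt_id.mul ((continuousAt_id.add continuousAt_const).log (by simpa using hc.ne'))
  have hlim := (hfirst.tendsto.sub (continuous_mul_log.tendsto 0)).mono_left
    (nhdsWithin_le_nhds (s := Ioi 0))
  simp only [zero_mul, sub_zero] at hlim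
  exact hlim.congr' hsplit

theorem exists_mul_log_one_add_div_eq (hc : 0 < c) {b : ℝ} (hb : b ∈ Ioo 0 c) :
    ∃ T, 0 < T ∧ T * log (1 + c / T) = b := by
  have hcont : ContinuousOn (fun T => T * log (1 + c / T)) (Ioi 0) := by
    refine continuousOn_id.mul (ContinuousOn.log ?_ fun T (hT : 0 < T) => by positivity)
    fun_prop (disch := intro x hx; exact ne_of_gt hx)
  exact isPreconnected_Ioi.intermediate_value_Ioo (l₁ := 𝓝[>] 0) inf_le_right
    (le_principal_iff.2 (Ioi_mem_atTop 0)) hcont (tendsto_mul_log_one_add_div_nhdsGT_zero hc)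
    (tendsto_mul_log_one_add_div_atTop c) hb

end Real

theorem half_mul_mul_logb_two (T W x : ℝ) :
    T / 2 * W * logb 2 x = W / (2 * log 2) * (T * log x) := by
  rw [logb]
  ring

theorem stmt_5_general (W β E H α B : ℝ)
    (hW : 0 < W) (hβ : 0 < β) (hE : 0 < E) (hH : 0 < H) (hB : 0 < B) :
    (B < W * β * E / (2 * H ^ α * Real.log 2) →
      ∃ T : ℝ, 0 < T ∧ (T / 2) * W * Real.logb 2 (1 + β * E / (T * H ^ α)) = B) ∧
    (W * β * E / (2 * H ^ α * Real.log 2) ≤ B →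
      ∀ T : ℝ, 0 < T → ¬ (B ≤ (T / 2) * W * Real.logb 2 (1 + β * E / (T * H ^ α)))) := by
  set c := β * E / H ^ α
  have hc : 0 < c := by positivity
  have hk : 0 < W / (2 * log 2) := by positivity
  have hrate : ∀ T, T / 2 * W * logb 2 (1 + β * E / (T * H ^ α)) =
      W / (2 * log 2) * (T * log (1 + c / T)) := fun T => by
    rw [half_mul_mul_logb_two, div_div, mul_comm (H ^ α) T]
  have hbound : W * β * E / (2 * H ^ α * log 2) = W / (2 * log 2) * c := by
    simp only [c]
    field_simp
  simp only [hrate, hbound]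
  constructor
  · intro hBc
    obtain ⟨T, hT, hTb⟩ := exists_mul_log_one_add_div_eq hc (b := B / (W / (2 * log 2)))
      ⟨by positivity, (div_lt_iff₀' hk).2 hBc⟩
    exact ⟨T, hT, by rw [hTb, mul_div_cancel₀ B hk.ne']⟩
  · intro hcB T hT hBT
    linarith [mul_lt_mul_of_pos_left (mul_log_one_add_div_lt hc hT) hk]

theorem stmt_5 (W β E H α B : ℝ)
    (hW : 0 < W) (hβ : 0 < β) (hE : 0 < E) (hH : 0 < H) (hα : 2 ≤ α) (hB : 0 < B) :
    (B < W * β * E / (2 * H ^ α * Real.log 2) →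
      ∃ T : ℝ, 0 < T ∧ (T / 2) * W * Real.logb 2 (1 + β * E / (T * H ^ α)) = B) ∧
    (W * β * E / (2 * H ^ α * Real.log 2) ≤ B →
      ∀ T : ℝ, 0 < T → ¬ (B ≤ (T / 2) * W * Real.logb 2 (1 + β * E / (T * H ^ α)))) :=
  stmt_5_general W β E H α B hW hβ hE hH hB
end

section
/- Let a₁ > 0, a₂ > 0, a₃ ∈ ℝ, E > 0, and suppose a₁·log₂(a₂/a₁) - a₃ ≥ 0. Then the function g(u) = u·(a₁·log₂((E/u + a₂)/a₁) - a₃) is strictly increasing on (0, ∞). -/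
/-!
Put `c = a₁ log₂(a₂/a₁) - a₃ ≥ 0` and `b = E/a₂`. Splitting the logarithm,
`g(u) = c·u + (a₁ / log 2)·u·log(1 + b/u)`, so it suffices that `u ↦ u·log(1 + b/u)` is strictly
increasing. Its derivative `log(1 + t) - t/(1 + t)` (with `t = b/u`) is positive for `t > 0`.
-/

open Real Set

lemma div_one_add_lt_log_one_add {t : ℝ} (ht : 0 < t) : t / (1 + t) < log (1 + t) := by
  refine lt_of_le_of_lt ?_ (lt_log_one_add_of_pos ht)
  rw [div_le_div_iff₀ (by positivity) (by positivity)]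
  nlinarith

lemma hasDerivAt_mul_log_one_add_div {b u : ℝ} (hb : 0 ≤ b) (hu : 0 < u) :
    HasDerivAt (fun u => u * log (1 + b / u)) (log (1 + b / u) - b / (u + b)) u := by
  have hinner : HasDerivAt (fun u => 1 + b / u) (-(b / u ^ 2)) u := by
    simpa [div_eq_mul_inv] using ((hasDerivAt_inv hu.ne').const_mul b).const_add 1
  refine ((hasDerivAt_id' u).mul (hinner.log (by positivity))).congr_deriv ?_
  field_simp
  ring

lemma strictMonoOn_mul_log_one_add_div {b : ℝ} (hb : 0 < b) :
    StrictMonoOn (fun u => u * log (1 + b / u)) (Ioi 0) := by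
  have hderiv (u : ℝ) (hu : u ∈ Ioi (0 : ℝ)) :=
    hasDerivAt_mul_log_one_add_div hb.le (mem_Ioi.mp hu)
  refine strictMonoOn_of_hasDerivWithinAt_pos (f' := fun u => log (1 + b / u) - b / (u + b))
    (convex_Ioi 0)
    (fun u hu => (hderiv u hu).continuousAt.continuousWithinAt) ?_ ?_
  · rw [interior_Ioi]
    exact fun u hu => (hderiv u hu).hasDerivWithinAt
  · rw [interior_Ioi]
    intro u (hu : 0 < u)
    have hb_div : b / (u + b) = b / u / (1 + b / u) := by field_simp
    rw [hb_div, sub_pos]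
    exact div_one_add_lt_log_one_add (by positivity)

theorem stmt_13 (a₁ a₂ a₃ E : ℝ) (ha₁ : 0 < a₁) (ha₂ : 0 < a₂) (hE : 0 < E)
    (h : 0 ≤ a₁ * Real.logb 2 (a₂ / a₁) - a₃) :
    StrictMonoOn (fun u : ℝ => u * (a₁ * Real.logb 2 ((E / u + a₂) / a₁) - a₃))
      (Set.Ioi 0) := by
  set c := a₁ * logb 2 (a₂ / a₁) - a₃
  have hsplit : EqOn (fun u => a₁ / log 2 * (u * log (1 + E / a₂ / u)) + c * u)
      (fun u : ℝ => u * (a₁ * logb 2 ((E / u + a₂) / a₁) - a₃)) (Ioi 0) := by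
    intro u (hu : 0 < u)
    have hlog : log ((E / u + a₂) / a₁) = log (a₂ / a₁) + log (1 + E / a₂ / u) := by
      rw [← log_mul (by positivity) (by positivity)]
      congr 1
      field_simp
      ring
    simp only [c, logb, hlog]
    ring
  have hlin : MonotoneOn (fun u => c * u) (Ioi 0) :=
    fun _ _ _ _ huv => mul_le_mul_of_nonneg_left huv h
  have hlog : StrictMonoOn (fun u => a₁ / log 2 * (u * log (1 + E / a₂ / u))) (Ioi 0) :=
    fun _ hu _ hv huv => mul_lt_mul_of_pos_left
      (strictMonoOn_mul_log_one_add_div (by positivity) hu hv huv)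
      (div_pos ha₁ (log_pos one_lt_two))
  exact (hlog.add_monotone hlin).congr hsplit
end
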